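/- arXiv:0806.1123 — 9 statements merged into one kernel-verified Lean document; each statement's English description precedes it below -/
import Mathlib

section
/- In the braid group B_n, the Birman-Ko-Lee band generator a_{ts} := (a_{t-1} a_{t-2} ... a_{s+1}) a_s (a_{s+1}^{-1} ... a_{t-2}^{-1} a_{t-1}^{-1}) satisfies a_{ts} a_{sr} = a_{tr} a_{ts} for all n ≥ t > s > r ≥ 1, where a_i are the Artin generators. -/
/-- `descProd a s k` is the product `a (s+k) * a (s+k-1) * ... * a (s+1)`. -/
def descProd {G : Type*} [Group G] (a : ℕ → G) (s : ℕ) : ℕ → G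
  | 0 => 1
  | k + 1 => a (s + k + 1) * descProd a s k

/-- The Birman-Ko-Lee band generator
`a_{ts} = (a_{t-1} a_{t-2} ⋯ a_{s+1}) a_s (a_{s+1}⁻¹ ⋯ a_{t-2}⁻¹ a_{t-1}⁻¹)`. -/
def band {G : Type*} [Group G] (a : ℕ → G) (t s : ℕ) : G :=
  descProd a s (t - s - 1) * a s * (descProd a s (t - s - 1))⁻¹

/-!
Write `D = a_{t-1} ⋯ a_{s+1}` and `E = a_{s-1} ⋯ a_{r+1}`, so that `a_{ts} = D a_s D⁻¹`,
`a_{sr} = E a_r E⁻¹` and `a_{tr} = (D a_s) a_{sr} (D a_s)⁻¹`. The letters of `D` are far from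
those of `a_{sr}`, so `D` commutes with `a_{sr}`; then
`a_{ts} a_{sr} = D a_s a_{sr} D⁻¹ = (D a_s) a_{sr} (D a_s)⁻¹ · D a_s D⁻¹ = a_{tr} a_{ts}`.
-/

section Band

variable {G : Type*} [Group G] (a : ℕ → G)

theorem descProd_add (s k m : ℕ) :
    descProd a s (k + m) = descProd a (s + k) m * descProd a s k := by
  induction m with
  | zero => simp [descProd]
  | succ m ih => rw [← add_assoc, descProd, ih, descProd, mul_assoc, add_assoc s k m]

theorem commute_descProd {g : G} {s k : ℕ} (h : ∀ j, s < j → j ≤ s + k → Commute g (a j)) :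
    Commute g (descProd a s k) := by
  induction k with
  | zero => exact Commute.one_right g
  | succ k ih =>
    exact (h (s + k + 1) (by omega) (by omega)).mul_right
      (ih fun j hj hj' => h j hj (by omega))

theorem commute_band {g : G} {s r : ℕ} (hrs : r < s)
    (h : ∀ i, r ≤ i → i < s → Commute g (a i)) :
    Commute g (band a s r) := by
  have hE : Commute g (descProd a r (s - r - 1)) :=
    commute_descProd a fun j hj hj' => h j hj.le (by omega)
  exact (hE.mul_right (h r le_rfl hrs)).mul_right hE.inv_right

theorem band_eq_conj_band {t s r : ℕ} (hrs : r < s) (hst : s < t) :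
    band a t r = (descProd a s (t - s - 1) * a s) * band a s r *
      (descProd a s (t - s - 1) * a s)⁻¹ := by
  have hsplit : descProd a r (t - r - 1) =
      descProd a s (t - s - 1) * a s * descProd a r (s - r - 1) := by
    have hlen : t - r - 1 = (s - r - 1 + 1) + (t - s - 1) := by omega
    have hstart : r + (s - r - 1 + 1) = s := by omega
    rw [hlen, descProd_add, hstart, descProd, show r + (s - r - 1) + 1 = s by omega, mul_assoc]
  simp only [band, hsplit]
  group

theorem band_mul_band_of_commute {t s r : ℕ} (hrs : r < s) (hst : s < t)
    (h : Commute (band a s r) (descProd a s (t - s - 1))) :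
    band a t s * band a s r = band a t r * band a t s := by
  set D := descProd a s (t - s - 1)
  set x := band a s r
  have hD : D⁻¹ * x = x * D⁻¹ := h.inv_right.eq.symm
  rw [band_eq_conj_band a hrs hst]
  calc band a t s * x = D * a s * (D⁻¹ * x) := by simp only [band, D]; group
    _ = D * a s * (x * D⁻¹) := by rw [hD]
    _ = D * a s * x * (D * a s)⁻¹ * band a t s := by simp only [band, D]; group

end Band

theorem band_mul_band_eq_band_mul_band_general {G : Type*} [Group G] (n : ℕ) (a : ℕ → G)
    (hcomm : ∀ i j, 1 ≤ i → i + 2 ≤ j → j ≤ n - 1 → a i * a j = a j * a i) :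
    ∀ t s r, t ≤ n → s < t → r < s → 1 ≤ r →
      band a t s * band a s r = band a t r * band a t s := by
  intro t s r htn hst hrs hr
  apply band_mul_band_of_commute a hrs hst
  refine commute_descProd a fun j hsj hjt => (commute_band a hrs fun i hri his => ?_).symm
  exact (hcomm i j (by omega) (by omega) (by omega) : Commute (a i) (a j)).symm

theorem band_mul_band_eq_band_mul_band {G : Type*} [Group G] (n : ℕ) (a : ℕ → G)
    (hbraid : ∀ i, 1 ≤ i → i + 1 ≤ n - 1 →
      a i * a (i + 1) * a i = a (i + 1) * a i * a (i + 1))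
    (hcomm : ∀ i j, 1 ≤ i → i + 2 ≤ j → j ≤ n - 1 → a i * a j = a j * a i) :
    ∀ t s r, t ≤ n → s < t → r < s → 1 ≤ r →
      band a t s * band a s r = band a t r * band a t s :=
  band_mul_band_eq_band_mul_band_general n a hcomm
end

section
/- Let G be a group containing elements x_{ts} for n ≥ t > s ≥ 1 satisfying the Birman-Ko-Lee relations: x_{ts} x_{rq} = x_{rq} x_{ts} when (t-r)(t-q)(s-r)(s-q) > 0, and x_{ts} x_{sr} = x_{tr} x_{ts} = x_{sr} x_{tr} for t > s > r. Write (t_m, t_{m-1}, ..., t_1) for the product x_{t_m t_{m-1}} x_{t_{m-1} t_{m-2}} ... x_{t_2 t_1}. Then for any descending sequence t_m > t_{m-1} > ... > t_1 and any 1 ≤ k ≤ m, one has (t_m, t_{m-1}, ..., t_1) = (t_k, ..., t_1, t_m, ..., t_{k+1}), where in mixed sequences (u, v) with u < v denotes x_{vu}. -/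
/-- `bprod x [t_m, ..., t_1]` is the product `x'_{t_m t_{m-1}} ⋯ x'_{t_2 t_1}` of consecutive
band generators, where `x'_{uv} := x (max u v) (min u v)`. -/
def bprod {G : Type*} [Group G] (x : ℕ → ℕ → G) : List ℕ → G
  | [] => 1
  | [_] => 1
  | a :: b :: l => x (max a b) (min a b) * bprod x (b :: l)

/-- The descending list `[a, a-1, ..., b]` (empty if `a < b`). -/
def descList (a b : ℕ) : List ℕ := (List.range (a + 1 - b)).map (fun i => a - i)

/-!
Rotating by one step moves the first entry `a` to the end. What follows `a` is a descending block
of entries below `a` and then a descending block of entries above `a`. Moving `a` across the lower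
block uses `x_{ab} x_{bc} = x_{bc} x_{ac}` (`a > b > c`), moving it across the upper block uses
`x_{ba} x_{bc} = x_{bc} x_{ca}` (`b > c > a`), and at the junction `g < a < u` of the blocks
`x_{ag} x_{ug} = x_{ug} x_{ua}` hands the factor over from one block to the other. Iterating, the product of a descending
sequence `U ++ D` equals that of its rotation `D ++ U`.
-/

section BandProduct

variable {G : Type*} [Group G] (x : ℕ → ℕ → G)

theorem bprod_cons_cons_of_lt {a b : ℕ} (h : b < a) (l : List ℕ) :
    bprod x (a :: b :: l) = x a b * bprod x (b :: l) := by
  simp [bprod, h.le]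

theorem bprod_cons_cons_of_gt {a b : ℕ} (h : a < b) (l : List ℕ) :
    bprod x (a :: b :: l) = x b a * bprod x (b :: l) := by
  simp [bprod, h.le]

theorem bprod_singleton (a : ℕ) : bprod x [a] = 1 := rfl

theorem bprod_pair_comm (a b : ℕ) : bprod x [a, b] = bprod x [b, a] := by
  simp [bprod, max_comm, min_comm]

theorem bprod_append_cons : ∀ (l₁ : List ℕ) (a : ℕ) (l₂ : List ℕ),
    bprod x (l₁ ++ a :: l₂) = bprod x (l₁ ++ [a]) * bprod x (a :: l₂)
  | [], a, l₂ => by simp [bprod]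
  | [b], a, l₂ => by simp [bprod]
  | b :: c :: l₁, a, l₂ => by
    have ih := bprod_append_cons (c :: l₁) a l₂
    simp only [List.cons_append] at ih ⊢
    rw [bprod, bprod, ih, mul_assoc]

end BandProduct

section BandRelations

variable {G : Type*} [Group G] {n : ℕ} {x : ℕ → ℕ → G}
  (hband1 : ∀ t s r : ℕ, t ≤ n → s < t → r < s → 1 ≤ r → x t s * x s r = x t r * x t s)
  (hband2 : ∀ t s r : ℕ, t ≤ n → s < t → r < s → 1 ≤ r → x t r * x t s = x s r * x t r)

include hband1 hband2 in
theorem bprod_cons_eq_concat_of_forall_lt :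
    ∀ {a : ℕ} {l : List ℕ}, a ≤ n → l.Pairwise (· > ·) → (∀ v ∈ l, 1 ≤ v ∧ v < a) →
      bprod x (a :: l) = bprod x (l ++ [a])
  | _, [], _, _, _ => rfl
  | a, [b], _, _, _ => bprod_pair_comm x a b
  | a, b :: c :: l, ha, hl, hv => by
    have hcb : c < b := List.rel_of_pairwise_cons hl (by simp)
    have hba : b < a := (hv b (by simp)).2
    have hc : 1 ≤ c := (hv c (by simp)).1
    have ih := bprod_cons_eq_concat_of_forall_lt ha (List.pairwise_cons.mp hl).2
      (fun v hv' => hv v (List.mem_cons_of_mem b hv'))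
    calc bprod x (a :: b :: c :: l) = x a b * x b c * bprod x (c :: l) := by
          rw [bprod_cons_cons_of_lt x hba, bprod_cons_cons_of_lt x hcb, mul_assoc]
      _ = x b c * (x a c * bprod x (c :: l)) := by
          rw [hband1 a b c ha hba hcb hc, hband2 a b c ha hba hcb hc, mul_assoc]
      _ = bprod x (b :: c :: l ++ [a]) := by
          rw [← bprod_cons_cons_of_lt x (hcb.trans hba), ih]
          simp only [List.cons_append, bprod_cons_cons_of_lt x hcb]

include hband1 in
theorem bprod_cons_eq_concat_of_forall_gt :
    ∀ {a : ℕ} {l : List ℕ}, 1 ≤ a → l.Pairwise (· > ·) → (∀ v ∈ l, a < v ∧ v ≤ n) →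
      bprod x (a :: l) = bprod x (l ++ [a])
  | _, [], _, _, _ => rfl
  | a, [b], _, _, _ => bprod_pair_comm x a b
  | a, b :: c :: l, ha, hl, hv => by
    have hcb : c < b := List.rel_of_pairwise_cons hl (by simp)
    have hab : a < b := (hv b (by simp)).1
    have hac : a < c := (hv c (by simp)).1
    have hb : b ≤ n := (hv b (by simp)).2
    have ih := bprod_cons_eq_concat_of_forall_gt ha (List.pairwise_cons.mp hl).2
      (fun v hv' => hv v (List.mem_cons_of_mem b hv'))
    calc bprod x (a :: b :: c :: l) = x b a * x b c * bprod x (c :: l) := by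
          rw [bprod_cons_cons_of_gt x hab, bprod_cons_cons_of_lt x hcb, mul_assoc]
      _ = x b c * bprod x (a :: c :: l) := by
          rw [← hband1 b c a hb hcb hac ha, bprod_cons_cons_of_gt x hac, mul_assoc]
      _ = bprod x (b :: c :: l ++ [a]) := by
          rw [ih]
          simp only [List.cons_append, bprod_cons_cons_of_lt x hcb]

include hband1 hband2 in
theorem bprod_cons_append_eq_concat {a : ℕ} {D U : List ℕ}
    (hl : (U ++ a :: D).Pairwise (· > ·)) (hn : ∀ v ∈ U ++ a :: D, 1 ≤ v ∧ v ≤ n) :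
    bprod x (a :: (D ++ U)) = bprod x (D ++ U ++ [a]) := by
  obtain ⟨hU, haD, hUa⟩ := List.pairwise_append.mp hl
  have hD := (List.pairwise_cons.mp haD).2
  have ha := hn a (by simp)
  have hDa : ∀ v ∈ D, 1 ≤ v ∧ v < a := fun v hv =>
    ⟨(hn v (by simp [hv])).1, List.rel_of_pairwise_cons haD hv⟩
  have haU : ∀ v ∈ U, a < v ∧ v ≤ n := fun v hv =>
    ⟨hUa v hv a (by simp), (hn v (by simp [hv])).2⟩
  rcases List.eq_nil_or_concat' D with rfl | ⟨D₀, g, rfl⟩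
  · exact bprod_cons_eq_concat_of_forall_gt hband1 ha.1 hU haU
  rcases U with _ | ⟨u, U'⟩
  · simpa using bprod_cons_eq_concat_of_forall_lt hband1 hband2 ha.2 hD hDa
  have hga : g < a := (hDa g (by simp)).2
  have hau : a < u := (haU u (by simp)).1
  have hg : 1 ≤ g := (hDa g (by simp)).1
  have hu : u ≤ n := (haU u (by simp)).2
  calc bprod x (a :: (D₀ ++ [g] ++ u :: U'))
      = bprod x (a :: D₀ ++ [g]) * bprod x (g :: u :: U') := by
        simpa using bprod_append_cons x (a :: D₀) g (u :: U')
    _ = bprod x (D₀ ++ [g]) * (x a g * x u g) * bprod x (u :: U') := by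
        rw [List.cons_append, bprod_cons_eq_concat_of_forall_lt hband1 hband2 ha.2 hD hDa,
          List.append_assoc, List.singleton_append, bprod_append_cons,
          bprod_cons_cons_of_gt x hga, bprod_cons_cons_of_gt x (hga.trans hau),
          bprod_singleton, mul_one, mul_assoc, mul_assoc, mul_assoc]
    _ = bprod x (D₀ ++ [g]) * x u g * (x u a * bprod x (u :: U')) := by
        rw [← hband2 u a g hu hau hga hg, mul_assoc, mul_assoc, mul_assoc]
    _ = bprod x (D₀ ++ [g]) * x u g * bprod x (u :: U' ++ [a]) := by
        rw [← bprod_cons_cons_of_gt x hau, bprod_cons_eq_concat_of_forall_gt hband1 ha.1 hU haU]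
    _ = bprod x (D₀ ++ [g] ++ u :: U' ++ [a]) := by
        rw [show D₀ ++ [g] ++ u :: U' ++ [a] = D₀ ++ g :: u :: (U' ++ [a]) by simp,
          bprod_append_cons x D₀ g (u :: (U' ++ [a])), bprod_cons_cons_of_gt x (hga.trans hau),
          List.cons_append, mul_assoc]

include hband1 hband2 in
theorem bprod_append_comm {U : List ℕ} :
    ∀ {D : List ℕ}, (U ++ D).Pairwise (· > ·) → (∀ v ∈ U ++ D, 1 ≤ v ∧ v ≤ n) →
      bprod x (U ++ D) = bprod x (D ++ U) := by
  induction U using List.reverseRecOn with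
  | nil => simp
  | append_singleton U₀ a ih =>
    intro D hl hn
    rw [List.append_assoc, List.singleton_append] at hl hn ⊢
    rw [ih hl hn, List.cons_append, bprod_cons_append_eq_concat hband1 hband2 hl hn,
      List.append_assoc]

end BandRelations

theorem bkl_lemma1_general {G : Type*} [Group G] (n : ℕ) (x : ℕ → ℕ → G)
    (hband1 : ∀ t s r : ℕ, t ≤ n → s < t → r < s → 1 ≤ r →
      x t s * x s r = x t r * x t s)
    (hband2 : ∀ t s r : ℕ, t ≤ n → s < t → r < s → 1 ≤ r →
      x t r * x t s = x s r * x t r) :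
    ∀ (m k : ℕ) (l : List ℕ), l.length = m → l.Chain' (· > ·) →
      (∀ u ∈ l, 1 ≤ u ∧ u ≤ n) → 1 ≤ k → k ≤ m →
      bprod x l = bprod x (l.rotate (m - k)) := by
  intro m k l _ hc hn _ _
  have hsplit := List.take_append_drop ((m - k) % l.length) l
  have hl := List.isChain_iff_pairwise.mp hc
  rw [← hsplit] at hl hn
  rw [List.rotate_eq_drop_append_take_mod]
  conv_lhs => rw [← hsplit]
  exact bprod_append_comm hband1 hband2 hl hn

theorem bkl_lemma1 {G : Type*} [Group G] (n : ℕ) (x : ℕ → ℕ → G)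
    (hcomm : ∀ t s r q : ℕ, t ≤ n → s < t → 1 ≤ s → r ≤ n → q < r → 1 ≤ q →
      0 < ((t : ℤ) - r) * ((t : ℤ) - q) * ((s : ℤ) - r) * ((s : ℤ) - q) →
      x t s * x r q = x r q * x t s)
    (hband1 : ∀ t s r : ℕ, t ≤ n → s < t → r < s → 1 ≤ r →
      x t s * x s r = x t r * x t s)
    (hband2 : ∀ t s r : ℕ, t ≤ n → s < t → r < s → 1 ≤ r →
      x t r * x t s = x s r * x t r) :
    ∀ (m k : ℕ) (l : List ℕ), l.length = m → l.Chain' (· > ·) →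
      (∀ u ∈ l, 1 ≤ u ∧ u ≤ n) → 1 ≤ k → k ≤ m →
      bprod x l = bprod x (l.rotate (m - k)) :=
  bkl_lemma1_general n x hband1 hband2
end

section
/- Let G be a group with elements x_{ts} for n ≥ t > s ≥ 1 satisfying the Birman-Ko-Lee relations. Then for t > t_3 > t_2 > t_1 with t_2 > s, one has x_{ts} x_{t_2 t_1} x_{t_3 t_1} = x_{t_3 t_2} x_{ts} x_{t_2 t_1}. -/
theorem sub_mul_sub_mul_sub_mul_sub_pos_of_nested {R : Type*} [CommRing R] [LinearOrder R]
    [IsStrictOrderedRing R] {t s r q : R} (hsq : s < q) (hqr : q < r) (hrt : r < t) :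
    0 < (t - r) * (t - q) * (s - r) * (s - q) := by
  have h : (t - r) * (t - q) * (s - r) * (s - q) = (t - r) * (t - q) * ((r - s) * (q - s)) := by
    ring
  rw [h]
  have hsr : s < r := hsq.trans hqr
  have hqt : q < t := hqr.trans hrt
  exact mul_pos (mul_pos (sub_pos.2 hrt) (sub_pos.2 hqt)) (mul_pos (sub_pos.2 hsr) (sub_pos.2 hsq))

section

variable {G : Type*} [Mul G] {n : ℕ} {x : ℕ → ℕ → G}

theorem commute_of_nested
    (hcomm : ∀ t s r q : ℕ, t ≤ n → s < t → 1 ≤ s → r ≤ n → q < r → 1 ≤ q →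
      0 < ((t : ℤ) - r) * ((t : ℤ) - q) * ((s : ℤ) - r) * ((s : ℤ) - q) →
      x t s * x r q = x r q * x t s)
    {t s r q : ℕ} (htn : t ≤ n) (hrt : r < t) (hqr : q < r) (hsq : s < q) (hs : 1 ≤ s) :
    Commute (x t s) (x r q) :=
  hcomm t s r q htn (hsq.trans (hqr.trans hrt)) hs (hrt.le.trans htn) hqr (hs.trans hsq.le)
    (sub_mul_sub_mul_sub_mul_sub_pos_of_nested (by exact_mod_cast hsq) (by exact_mod_cast hqr)
      (by exact_mod_cast hrt))

theorem mul_eq_mul_of_band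
    (hband1 : ∀ t s r : ℕ, t ≤ n → s < t → r < s → 1 ≤ r →
      x t s * x s r = x t r * x t s)
    (hband2 : ∀ t s r : ℕ, t ≤ n → s < t → r < s → 1 ≤ r →
      x t r * x t s = x s r * x t r)
    {t s r : ℕ} (htn : t ≤ n) (hst : s < t) (hrs : r < s) (hr : 1 ≤ r) :
    x s r * x t r = x t s * x s r :=
  (hband2 t s r htn hst hrs hr).symm.trans (hband1 t s r htn hst hrs hr).symm

end

theorem bkl_lemma3a {G : Type*} [Group G] (n : ℕ) (x : ℕ → ℕ → G)
    (hcomm : ∀ t s r q : ℕ, t ≤ n → s < t → 1 ≤ s → r ≤ n → q < r → 1 ≤ q →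
      0 < ((t : ℤ) - r) * ((t : ℤ) - q) * ((s : ℤ) - r) * ((s : ℤ) - q) →
      x t s * x r q = x r q * x t s)
    (hband1 : ∀ t s r : ℕ, t ≤ n → s < t → r < s → 1 ≤ r →
      x t s * x s r = x t r * x t s)
    (hband2 : ∀ t s r : ℕ, t ≤ n → s < t → r < s → 1 ≤ r →
      x t r * x t s = x s r * x t r) :
    ∀ t s t₁ t₂ t₃ : ℕ, t ≤ n → t₃ < t → t₂ < t₃ → t₁ < t₂ → 1 ≤ t₁ → s < t₂ → 1 ≤ s →
      x t s * x t₂ t₁ * x t₃ t₁ = x t₃ t₂ * x t s * x t₂ t₁ := by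
  intro t s t₁ t₂ t₃ htn h3t h23 h12 h1 hs2 hs1
  have hband : x t₂ t₁ * x t₃ t₁ = x t₃ t₂ * x t₂ t₁ :=
    mul_eq_mul_of_band hband1 hband2 (h3t.le.trans htn) h23 h12 h1
  have hcomm' : Commute (x t s) (x t₃ t₂) := commute_of_nested hcomm htn h3t h23 hs2 hs1
  rw [mul_assoc, hband, ← mul_assoc, hcomm'.eq]
end

section
/- Let G be a group with elements x_{ts} for n ≥ t > s ≥ 1 satisfying the Birman-Ko-Lee relations. Then for t_3 > t_2 > t_1 with t_2 > s, one has x_{t_3 s} x_{t_2 t_1} x_{t_3 t_1} = x_{t_2 s} x_{t_3 s} x_{t_2 t_1}. -/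
theorem bkl_band_mul_eq_mul_band {G : Type*} [Group G] {n : ℕ} {x : ℕ → ℕ → G}
    (hband1 : ∀ t s r : ℕ, t ≤ n → s < t → r < s → 1 ≤ r →
      x t s * x s r = x t r * x t s)
    (hband2 : ∀ t s r : ℕ, t ≤ n → s < t → r < s → 1 ≤ r →
      x t r * x t s = x s r * x t r)
    {t s r : ℕ} (ht : t ≤ n) (hst : s < t) (hrs : r < s) (hr : 1 ≤ r) :
    x s r * x t r = x t s * x s r :=
  (hband2 t s r ht hst hrs hr).symm.trans (hband1 t s r ht hst hrs hr).symm

theorem bkl_lemma3b_general {G : Type*} [Group G] (n : ℕ) (x : ℕ → ℕ → G)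
    (hband1 : ∀ t s r : ℕ, t ≤ n → s < t → r < s → 1 ≤ r →
      x t s * x s r = x t r * x t s)
    (hband2 : ∀ t s r : ℕ, t ≤ n → s < t → r < s → 1 ≤ r →
      x t r * x t s = x s r * x t r) :
    ∀ s t₁ t₂ t₃ : ℕ, t₃ ≤ n → t₂ < t₃ → t₁ < t₂ → 1 ≤ t₁ → s < t₂ → 1 ≤ s →
      x t₃ s * x t₂ t₁ * x t₃ t₁ = x t₂ s * x t₃ s * x t₂ t₁ := by
  intro s t₁ t₂ t₃ h3n h23 h12 h1 hs2 hs1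
  calc x t₃ s * x t₂ t₁ * x t₃ t₁
      = x t₃ s * (x t₂ t₁ * x t₃ t₁) := mul_assoc _ _ _
    _ = x t₃ s * x t₃ t₂ * x t₂ t₁ := by
        rw [bkl_band_mul_eq_mul_band hband1 hband2 h3n h23 h12 h1, mul_assoc]
    _ = x t₂ s * x t₃ s * x t₂ t₁ := by rw [hband2 t₃ t₂ s h3n h23 hs2 hs1]

theorem bkl_lemma3b {G : Type*} [Group G] (n : ℕ) (x : ℕ → ℕ → G)
    (hcomm : ∀ t s r q : ℕ, t ≤ n → s < t → 1 ≤ s → r ≤ n → q < r → 1 ≤ q →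
      0 < ((t : ℤ) - r) * ((t : ℤ) - q) * ((s : ℤ) - r) * ((s : ℤ) - q) →
      x t s * x r q = x r q * x t s)
    (hband1 : ∀ t s r : ℕ, t ≤ n → s < t → r < s → 1 ≤ r →
      x t s * x s r = x t r * x t s)
    (hband2 : ∀ t s r : ℕ, t ≤ n → s < t → r < s → 1 ≤ r →
      x t r * x t s = x s r * x t r) :
    ∀ s t₁ t₂ t₃ : ℕ, t₃ ≤ n → t₂ < t₃ → t₁ < t₂ → 1 ≤ t₁ → s < t₂ → 1 ≤ s →
      x t₃ s * x t₂ t₁ * x t₃ t₁ = x t₂ s * x t₃ s * x t₂ t₁ :=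
  bkl_lemma3b_general n x hband1 hband2
end

section
/- Let G be a group with elements x_{ts} for n ≥ t > s ≥ 1 satisfying the Birman-Ko-Lee relations, and let δ = x_{n,n-1} x_{n-1,n-2} ... x_{2,1}. Then for all n ≥ t > s ≥ 1, x_{ts} δ = δ x_{t+1, s+1}, where indices are taken modulo n (i.e., if t = n then x_{t+1,s+1} is interpreted as x_{s+1, 1}). -/
/-!
It suffices to treat the generators `x_{s+1,s}`: the relation
`x_{t+1,t} x_{ts} = x_{t+1,s} x_{t+1,t}` and its shifted copy then carry the statement from
`x_{ts}` to `x_{t+1,s}`. For `s + 1 < n` write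
`δ = (x_{n,n-1} ⋯ x_{s+3,s+2}) x_{s+2,s+1} x_{s+1,s} δ_s`: the outer factors commute with
`x_{s+1,s}` and `x_{s+2,s+1}`, and the braid relation for the middle pair turns one into the
other. For `s + 1 = n`, the relations `x_{n,m+1} x_{m+1,m} = x_{m+1,m} x_{n,m}` move `x_{n,n-1}`
through `δ_{n-1}` to `x_{n,1}`.
-/

theorem SemiconjBy.cancel_right {G : Type*} [Group G] {a x y x' y' : G}
    (h : SemiconjBy a (x * x') (y * y')) (h' : SemiconjBy a x' y') : SemiconjBy a x y := by
  simpa [mul_assoc] using h.mul_right h'.inv_right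

theorem descList_succ_one (k : ℕ) : descList (k + 1) 1 = (k + 1) :: descList k 1 := by
  simp [descList, List.range_succ_eq_map, Function.comp_def, Nat.succ_sub_succ]

namespace BKL

variable {G : Type*} [Group G] {n : ℕ} {x : ℕ → ℕ → G}

/-- `δ_m = x_{m,m-1} ⋯ x_{2,1}`. -/
def delta (x : ℕ → ℕ → G) (m : ℕ) : G := bprod x (descList m 1)

def CommRel (n : ℕ) (x : ℕ → ℕ → G) : Prop :=
  ∀ t s r q : ℕ, t ≤ n → s < t → 1 ≤ s → r ≤ n → q < r → 1 ≤ q →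
    0 < ((t : ℤ) - r) * ((t : ℤ) - q) * ((s : ℤ) - r) * ((s : ℤ) - q) →
    x t s * x r q = x r q * x t s

def BandRel₁ (n : ℕ) (x : ℕ → ℕ → G) : Prop :=
  ∀ t s r : ℕ, t ≤ n → s < t → r < s → 1 ≤ r → x t s * x s r = x t r * x t s

def BandRel₂ (n : ℕ) (x : ℕ → ℕ → G) : Prop :=
  ∀ t s r : ℕ, t ≤ n → s < t → r < s → 1 ≤ r → x t r * x t s = x s r * x t r

@[simp]
theorem delta_zero : delta x 0 = 1 := by
  simp [delta, descList, bprod]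

@[simp]
theorem delta_one : delta x 1 = 1 := by
  simp [delta, descList, bprod]

theorem delta_succ {m : ℕ} (hm : 1 ≤ m) : delta x (m + 1) = x (m + 1) m * delta x m := by
  obtain ⟨k, rfl⟩ : ∃ k, m = k + 1 := ⟨m - 1, by omega⟩
  rw [delta, descList_succ_one, descList_succ_one, bprod, ← descList_succ_one]
  simp [delta]

theorem CommRel.commute (h : CommRel n x) {t s r q : ℕ} (ht : t ≤ n) (hst : s < t)
    (hrs : r < s) (hqr : q < r) (hq : 1 ≤ q) : Commute (x t s) (x r q) :=
  h t s r q ht hst (by omega) (by omega) hqr hq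
    (mul_pos (mul_pos (mul_pos (by omega) (by omega)) (by omega)) (by omega))

theorem BandRel₁.semiconjBy_cyclic (h₁ : BandRel₁ n x) (h₂ : BandRel₂ n x) {t s r : ℕ}
    (ht : t ≤ n) (hst : s < t) (hrs : r < s) (hr : 1 ≤ r) :
    SemiconjBy (x s r) (x t r) (x t s) :=
  ((h₁ t s r ht hst hrs hr).trans (h₂ t s r ht hst hrs hr)).symm

theorem BandRel₁.braid (h₁ : BandRel₁ n x) (h₂ : BandRel₂ n x) {t s r : ℕ}
    (ht : t ≤ n) (hst : s < t) (hrs : r < s) (hr : 1 ≤ r) :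
    SemiconjBy (x t s * x s r) (x t s) (x s r) := by
  calc x t s * x s r * x t s = x s r * (x t r * x t s) := by
        rw [h₁.semiconjBy_cyclic h₂ ht hst hrs hr |>.eq.symm, mul_assoc]
    _ = x s r * (x t s * x s r) := by rw [h₁ t s r ht hst hrs hr]

theorem commute_delta_of_lt (h : CommRel n x) {t s m : ℕ} (ht : t ≤ n) (hst : s < t)
    (hms : m < s) : Commute (delta x m) (x t s) := by
  rcases Nat.lt_or_ge m 1 with hm | hm
  · simp [Nat.lt_one_iff.mp hm]
  induction m, hm using Nat.le_induction with
  | base => simp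
  | succ m hm ih =>
    rw [delta_succ hm]
    exact (h.commute ht hst hms (by omega) hm).symm.mul_left (ih (by omega))

theorem semiconjBy_delta_of_lt (h₁ : BandRel₁ n x) (h₂ : BandRel₂ n x) {t m : ℕ} (ht : t ≤ n)
    (hmt : m < t) (hm : 1 ≤ m) : SemiconjBy (delta x m) (x t 1) (x t m) := by
  induction m, hm using Nat.le_induction with
  | base => simp
  | succ m hm ih =>
    rw [delta_succ hm]
    exact (h₁.semiconjBy_cyclic h₂ ht hmt (by omega) hm).mul_left (ih (by omega))

theorem semiconjBy_delta_of_add_two_le (hc : CommRel n x) (h₁ : BandRel₁ n x)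
    (h₂ : BandRel₂ n x) {s m : ℕ} (hs : 1 ≤ s) (hsm : s + 2 ≤ m) (hmn : m ≤ n) :
    SemiconjBy (delta x m) (x (s + 2) (s + 1)) (x (s + 1) s) := by
  induction m, hsm using Nat.le_induction with
  | base =>
    rw [delta_succ (by omega), delta_succ hs, ← mul_assoc]
    exact (h₁.braid h₂ hmn (by omega) (by omega) hs).mul_left
      (commute_delta_of_lt hc hmn (by omega) (by omega))
  | succ m hm ih =>
    rw [delta_succ (by omega)]
    exact SemiconjBy.mul_left (hc.commute hmn (by omega) (by omega) (by omega) hs)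
      (ih (by omega))

/-- The generator `x_{t+1,s+1}`, with indices taken modulo `n` (`x_{n+1,s+1} = x_{s+1,1}`). -/
def shifted (n : ℕ) (x : ℕ → ℕ → G) (t s : ℕ) : G :=
  if t = n then x (s + 1) 1 else x (t + 1) (s + 1)

theorem shifted_band (h₁ : BandRel₁ n x) (h₂ : BandRel₂ n x) {t s : ℕ} (hs : 1 ≤ s)
    (hst : s < t) (htn : t + 1 ≤ n) :
    shifted n x (t + 1) t * x (t + 1) (s + 1) =
      shifted n x (t + 1) s * shifted n x (t + 1) t := by
  unfold shifted
  split_ifs with h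
  · exact h₂ (t + 1) (s + 1) 1 htn (by omega) (by omega) le_rfl
  · exact h₁ (t + 2) (t + 1) (s + 1) (by omega) (by omega) (by omega) (by omega)

theorem semiconjBy_delta_shifted_succ (hc : CommRel n x) (h₁ : BandRel₁ n x)
    (h₂ : BandRel₂ n x) {s : ℕ} (hs : 1 ≤ s) (hsn : s + 1 ≤ n) :
    SemiconjBy (delta x n) (shifted n x (s + 1) s) (x (s + 1) s) := by
  unfold shifted
  split_ifs with h
  · subst h
    rw [delta_succ hs]
    exact SemiconjBy.mul_left (Commute.refl _)
      (semiconjBy_delta_of_lt h₁ h₂ le_rfl (by omega) hs)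
  · exact semiconjBy_delta_of_add_two_le hc h₁ h₂ hs (by omega) le_rfl

theorem semiconjBy_delta_shifted (hc : CommRel n x) (h₁ : BandRel₁ n x) (h₂ : BandRel₂ n x)
    {t s : ℕ} (hs : 1 ≤ s) (hst : s < t) (htn : t ≤ n) :
    SemiconjBy (delta x n) (shifted n x t s) (x t s) := by
  induction t, hst using Nat.le_induction with
  | base => exact semiconjBy_delta_shifted_succ hc h₁ h₂ hs htn
  | succ t hst ih =>
    have hts : SemiconjBy (delta x n) (x (t + 1) (s + 1)) (x t s) := by
      simpa [shifted, show t ≠ n by omega] using ih (by omega)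
    have hnext := semiconjBy_delta_shifted_succ hc h₁ h₂ (by omega : 1 ≤ t) htn
    refine SemiconjBy.cancel_right ?_ hnext
    rw [← shifted_band h₁ h₂ hs hst htn, ← h₁ (t + 1) t s htn (by omega) (by omega) hs]
    exact hnext.mul_right hts

end BKL

theorem bkl_delta_shift {G : Type*} [Group G] (n : ℕ) (x : ℕ → ℕ → G)
    (hcomm : ∀ t s r q : ℕ, t ≤ n → s < t → 1 ≤ s → r ≤ n → q < r → 1 ≤ q →
      0 < ((t : ℤ) - r) * ((t : ℤ) - q) * ((s : ℤ) - r) * ((s : ℤ) - q) →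
      x t s * x r q = x r q * x t s)
    (hband1 : ∀ t s r : ℕ, t ≤ n → s < t → r < s → 1 ≤ r →
      x t s * x s r = x t r * x t s)
    (hband2 : ∀ t s r : ℕ, t ≤ n → s < t → r < s → 1 ≤ r →
      x t r * x t s = x s r * x t r) :
    ∀ t s : ℕ, t ≤ n → s < t → 1 ≤ s →
      x t s * bprod x (descList n 1) =
        bprod x (descList n 1) * (if t = n then x (s + 1) 1 else x (t + 1) (s + 1)) :=
  fun _ _ ht hst hs => (BKL.semiconjBy_delta_shifted hcomm hband1 hband2 hs hst ht).eq.symm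
end

section
/- Let G be a group with elements x_{ts} satisfying the Birman-Ko-Lee relations and δ = x_{n,n-1} ... x_{2,1}. Then for every n ≥ t > s ≥ 1, one has (n, ..., t, s-1, ..., 1) · (t-1, ..., s) · x_{ts} = δ, where (u_m, ..., u_1) denotes the product of consecutive band generators. In particular, every band generator x_{ts} has a left inverse expressible as a positive word times δ^{-1}, so x_{ts}^{-1} = δ^{-1} (n,...,t,s-1,...,1)(t-1,...,s). -/
namespace BKLaux

variable {G : Type*} [Group G]

/-- `Dn x c a = x a (a-1) * x (a-1) (a-2) * ⋯ * x (c+1) c`; equals `1` if `a ≤ c`. -/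
def Dn (x : ℕ → ℕ → G) (c : ℕ) : ℕ → G
  | 0 => 1
  | (a+1) => if c ≤ a then x (a+1) a * Dn x c a else 1

/-- `asc x t s d = x t s * x t (s+1) * ⋯ * x t (s+d)`. -/
def asc (x : ℕ → ℕ → G) (t : ℕ) : ℕ → ℕ → G
  | s, 0 => x t s
  | s, (d+1) => x t s * asc x t (s+1) d

lemma Dn_zero (x : ℕ → ℕ → G) (c : ℕ) : Dn x c 0 = 1 := rfl

lemma Dn_succ (x : ℕ → ℕ → G) {c a : ℕ} (h : c ≤ a) :
    Dn x c (a+1) = x (a+1) a * Dn x c a := by simp [Dn, h]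

lemma Dn_one (x : ℕ → ℕ → G) {c a : ℕ} (h : a ≤ c) : Dn x c a = 1 := by
  cases a with
  | zero => rfl
  | succ a => have : ¬ c ≤ a := by omega
              simp [Dn, this]

lemma Dn_split (x : ℕ → ℕ → G) {c b : ℕ} (hcb : c ≤ b) :
    ∀ a, b ≤ a → Dn x c a = Dn x b a * Dn x c b
  | 0, h => by
      have hb : b = 0 := by omega
      have hc : c = 0 := by omega
      subst hb; subst hc; simp [Dn_zero]
  | (a+1), h => by
      rcases Nat.lt_or_ge a b with h1 | h1
      · have hb : b = a + 1 := by omega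
        subst hb
        rw [Dn_one x (le_refl (a+1)), one_mul]
      · rw [Dn_succ x (le_trans hcb h1), Dn_succ x h1, Dn_split x hcb a h1, mul_assoc]

lemma asc_succ (x : ℕ → ℕ → G) (t : ℕ) :
    ∀ d s, asc x t s (d+1) = asc x t s d * x t (s+d+1)
  | 0, s => by simp [asc]
  | (d+1), s => by
      have e : s+1+d+1 = s+(d+1)+1 := by omega
      show x t s * asc x t (s+1) (d+1) = asc x t s (d+1) * x t (s+(d+1)+1)
      rw [asc_succ x t d (s+1), e]
      show x t s * (asc x t (s+1) d * x t (s+(d+1)+1)) = x t s * asc x t (s+1) d * x t (s+(d+1)+1)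
      rw [mul_assoc]

section Relations

variable {n : ℕ} {x : ℕ → ℕ → G}

lemma comm_Dn
    (hcomm : ∀ t s r q : ℕ, t ≤ n → s < t → 1 ≤ s → r ≤ n → q < r → 1 ≤ q →
      0 < ((t : ℤ) - r) * ((t : ℤ) - q) * ((s : ℤ) - r) * ((s : ℤ) - q) →
      x t s * x r q = x r q * x t s) :
    ∀ m, m ≤ n → ∀ t k c, t ≤ n → k < t → 1 ≤ k → 1 ≤ c →
      (m < k ∨ (k < c ∧ m < t)) →
      x t k * Dn x c m = Dn x c m * x t k
  | 0, _, t, k, c, _, _, _, _, _ => by simp [Dn_zero]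
  | (m+1), hm, t, k, c, ht, hkt, hk, hc, hcase => by
      rcases Nat.lt_or_ge m c with h1 | h1
      · rw [Dn_one x (by omega : m + 1 ≤ c)]; simp
      · have hpos : 0 < ((t : ℤ) - (m+1 : ℕ)) * ((t : ℤ) - (m : ℕ)) *
            ((k : ℤ) - (m+1 : ℕ)) * ((k : ℤ) - (m : ℕ)) := by
          rcases hcase with h2 | ⟨h2, h3⟩
          · have e1 : (0:ℤ) < (t : ℤ) - (m+1 : ℕ) := by omega
            have e2 : (0:ℤ) < (t : ℤ) - (m : ℕ) := by omega
            have e3 : (0:ℤ) < (k : ℤ) - (m+1 : ℕ) := by omega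
            have e4 : (0:ℤ) < (k : ℤ) - (m : ℕ) := by omega
            exact mul_pos (mul_pos (mul_pos e1 e2) e3) e4
          · have e1 : (0:ℤ) < (t : ℤ) - (m+1 : ℕ) := by omega
            have e2 : (0:ℤ) < (t : ℤ) - (m : ℕ) := by omega
            have e3 : ((k : ℤ) - (m+1 : ℕ)) < 0 := by omega
            have e4 : ((k : ℤ) - (m : ℕ)) < 0 := by omega
            calc (0:ℤ) < ((t : ℤ) - (m+1 : ℕ)) * ((t : ℤ) - (m : ℕ)) *
                (((k : ℤ) - (m+1 : ℕ)) * ((k : ℤ) - (m : ℕ))) :=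
                  mul_pos (mul_pos e1 e2) (mul_pos_of_neg_of_neg e3 e4)
              _ = _ := by ring
        have hx : x t k * x (m+1) m = x (m+1) m * x t k :=
          hcomm t k (m+1) m ht hkt hk hm (by omega) (by omega) hpos
        have ih : x t k * Dn x c m = Dn x c m * x t k :=
          comm_Dn hcomm m (by omega) t k c ht hkt hk hc
            (by rcases hcase with h2 | ⟨h2, h3⟩
                · exact Or.inl (by omega)
                · exact Or.inr ⟨h2, by omega⟩)
        rw [Dn_succ x h1, ← mul_assoc, hx, mul_assoc, ih, ← mul_assoc]

lemma Dn_comm_Dn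
    (hcomm : ∀ t s r q : ℕ, t ≤ n → s < t → 1 ≤ s → r ≤ n → q < r → 1 ≤ q →
      0 < ((t : ℤ) - r) * ((t : ℤ) - q) * ((s : ℤ) - r) * ((s : ℤ) - q) →
      x t s * x r q = x r q * x t s)
    (c1 m1 c2 : ℕ) (hc1 : 1 ≤ c1) (hc2 : 1 ≤ c2) (h12 : m1 < c2) :
    ∀ m2, m2 ≤ n → Dn x c2 m2 * Dn x c1 m1 = Dn x c1 m1 * Dn x c2 m2
  | 0, _ => by simp [Dn_zero]
  | (m2+1), hm2 => by
      rcases Nat.lt_or_ge m2 c2 with h1 | h1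
      · rw [Dn_one x (by omega : m2 + 1 ≤ c2)]; simp
      · have hx : x (m2+1) m2 * Dn x c1 m1 = Dn x c1 m1 * x (m2+1) m2 :=
          comm_Dn hcomm m1 (by omega) (m2+1) m2 c1 hm2 (by omega) (by omega) hc1
            (Or.inl (by omega))
        have ih := Dn_comm_Dn hcomm c1 m1 c2 hc1 hc2 h12 m2 (by omega)
        rw [Dn_succ x h1, mul_assoc, ih, ← mul_assoc, hx, mul_assoc]

lemma lemM
    (hcomm : ∀ t s r q : ℕ, t ≤ n → s < t → 1 ≤ s → r ≤ n → q < r → 1 ≤ q →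
      0 < ((t : ℤ) - r) * ((t : ℤ) - q) * ((s : ℤ) - r) * ((s : ℤ) - q) →
      x t s * x r q = x r q * x t s)
    (hband2 : ∀ t s r : ℕ, t ≤ n → s < t → r < s → 1 ≤ r →
      x t r * x t s = x s r * x t r) :
    ∀ d s t, 1 ≤ s → t ≤ n → s + d < t →
      Dn x s (s+d) * x t s = asc x t s d := by
  intro d
  induction d with
  | zero => intro s t hs ht hst
            rw [Nat.add_zero, Dn_one x (le_refl s), one_mul]
            rfl
  | succ d ih =>
      intro s t hs ht hst
      have h1 : Dn x s (s+(d+1)) = Dn x (s+1) (s+d+1) * Dn x s (s+1) := by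
        rw [show s+(d+1) = s+d+1 by omega]
        exact Dn_split x (by omega) (s+d+1) (by omega)
      have h2 : Dn x s (s+1) = x (s+1) s := by
        rw [Dn_succ x (le_refl s), Dn_one x (le_refl s), mul_one]
      have h3 : x (s+1) s * x t s = x t s * x t (s+1) :=
        (hband2 t (s+1) s ht (by omega) (by omega) hs).symm
      have h4 : x t s * Dn x (s+1) (s+d+1) = Dn x (s+1) (s+d+1) * x t s :=
        comm_Dn hcomm (s+d+1) (by omega) t s (s+1) ht (by omega) hs (by omega)
          (Or.inr ⟨by omega, by omega⟩)
      have ih' : Dn x (s+1) ((s+1)+d) * x t (s+1) = asc x t (s+1) d :=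
        ih (s+1) t (by omega) ht (by omega)
      calc Dn x s (s+(d+1)) * x t s
          = Dn x (s+1) (s+d+1) * (x (s+1) s * x t s) := by rw [h1, h2, mul_assoc]
        _ = Dn x (s+1) (s+d+1) * (x t s * x t (s+1)) := by rw [h3]
        _ = (x t s * Dn x (s+1) (s+d+1)) * x t (s+1) := by
              rw [← mul_assoc, ← h4]
        _ = x t s * (Dn x (s+1) ((s+1)+d) * x t (s+1)) := by
              rw [mul_assoc]; norm_num [show s+d+1 = (s+1)+d by omega]
        _ = x t s * asc x t (s+1) d := by rw [ih']
        _ = asc x t s (d+1) := rfl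

lemma lemN
    (hcomm : ∀ t s r q : ℕ, t ≤ n → s < t → 1 ≤ s → r ≤ n → q < r → 1 ≤ q →
      0 < ((t : ℤ) - r) * ((t : ℤ) - q) * ((s : ℤ) - r) * ((s : ℤ) - q) →
      x t s * x r q = x r q * x t s)
    (hband1 : ∀ t s r : ℕ, t ≤ n → s < t → r < s → 1 ≤ r →
      x t s * x s r = x t r * x t s) :
    ∀ d s t, 1 ≤ s → t ≤ n → s + d < t →
      x t (s+d) * Dn x s (s+d) = asc x t s d := by
  intro d
  induction d with
  | zero => intro s t hs ht hst
            rw [Nat.add_zero, Dn_one x (le_refl s), mul_one]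
            rfl
  | succ d ih =>
      intro s t hs ht hst
      have h1 : Dn x s (s+(d+1)) = x (s+d+1) (s+d) * Dn x s (s+d) := by
        rw [show s+(d+1) = (s+d)+1 by omega]
        exact Dn_succ x (by omega)
      have h2 : x t (s+d+1) * x (s+d+1) (s+d) = x t (s+d) * x t (s+d+1) :=
        hband1 t (s+d+1) (s+d) ht (by omega) (by omega) (by omega)
      have h3 : x t (s+d+1) * Dn x s (s+d) = Dn x s (s+d) * x t (s+d+1) :=
        comm_Dn hcomm (s+d) (by omega) t (s+d+1) s ht (by omega) (by omega) hs
          (Or.inl (by omega))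
      have ih' : x t (s+d) * Dn x s (s+d) = asc x t s d := ih s t hs ht (by omega)
      calc x t (s+(d+1)) * Dn x s (s+(d+1))
          = x t (s+d+1) * (x (s+d+1) (s+d) * Dn x s (s+d)) := by
            rw [h1, show s+(d+1) = s+d+1 by omega]
        _ = x t (s+d) * (x t (s+d+1) * Dn x s (s+d)) := by
            rw [← mul_assoc, h2, mul_assoc]
        _ = (x t (s+d) * Dn x s (s+d)) * x t (s+d+1) := by rw [h3, mul_assoc]
        _ = asc x t s d * x t (s+d+1) := by rw [ih']
        _ = asc x t s (d+1) := (asc_succ x t d s).symm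

lemma lemL
    (hcomm : ∀ t s r q : ℕ, t ≤ n → s < t → 1 ≤ s → r ≤ n → q < r → 1 ≤ q →
      0 < ((t : ℤ) - r) * ((t : ℤ) - q) * ((s : ℤ) - r) * ((s : ℤ) - q) →
      x t s * x r q = x r q * x t s)
    (hband1 : ∀ t s r : ℕ, t ≤ n → s < t → r < s → 1 ≤ r →
      x t s * x s r = x t r * x t s)
    (hband2 : ∀ t s r : ℕ, t ≤ n → s < t → r < s → 1 ≤ r →
      x t r * x t s = x s r * x t r)
    {s t : ℕ} (hs : 1 ≤ s) (hst : s < t) (ht : t ≤ n) :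
    Dn x s (t-1) * x t s = x t (t-1) * Dn x s (t-1) := by
  obtain ⟨d, hd⟩ : ∃ d, t - 1 = s + d := ⟨t-1-s, by omega⟩
  rw [hd, lemM hcomm hband2 d s t hs ht (by omega),
    ← lemN hcomm hband1 d s t hs ht (by omega)]

end Relations

lemma descList_nil {a b : ℕ} (h : a < b) : descList a b = [] := by
  unfold descList
  rw [show a + 1 - b = 0 by omega]
  rfl

lemma descList_succ {a b : ℕ} (h : b ≤ a+1) : descList (a+1) b = (a+1) :: descList a b := by
  unfold descList
  rw [show a+1+1-b = (a+1-b)+1 by omega, List.range_succ_eq_map, List.map_cons,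
    List.map_map]
  congr 1
  apply List.map_congr_left
  intro i _
  simp [Function.comp]

lemma descList_concat {a b : ℕ} (h : b ≤ a) : descList a b = descList a (b+1) ++ [b] := by
  unfold descList
  rw [show a+1-b = (a-b)+1 by omega, List.range_succ, List.map_append,
    show a+1-(b+1) = a-b by omega]
  simp [Nat.sub_sub_self h]

lemma descList_cons {a b : ℕ} (h : b ≤ a) : ∃ l, descList a b = a :: l := by
  cases a with
  | zero =>
      have : b = 0 := by omega
      subst this
      exact ⟨[], by simp [descList, List.range_succ]⟩
  | succ a => exact ⟨descList a b, descList_succ h⟩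

lemma bprod_descList (x : ℕ → ℕ → G) : ∀ a b, bprod x (descList a b) = Dn x b a := by
  intro a
  induction a with
  | zero =>
      intro b
      cases b with
      | zero => simp [descList, List.range_succ, bprod, Dn_zero]
      | succ b => rw [descList_nil (by omega), Dn_one x (by omega)]; rfl
  | succ a ih =>
      intro b
      rcases Nat.lt_or_ge (a+1) b with h | h
      · rw [descList_nil h, Dn_one x (by omega)]; rfl
      rcases Nat.lt_or_ge a b with h1 | h1
      · have hb : b = a+1 := by omega
        subst hb
        rw [descList_succ (le_refl (a+1)), descList_nil (by omega), Dn_one x (le_refl (a+1))]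
        rfl
      · obtain ⟨l, hl⟩ := descList_cons h1
        rw [descList_succ h, hl,
          show bprod x ((a+1) :: a :: l) = x (max (a+1) a) (min (a+1) a) * bprod x (a :: l)
            from rfl,
          Nat.max_eq_left (by omega), Nat.min_eq_right (by omega), ← hl, ih b,
          Dn_succ x h1]

lemma bprod_mid (x : ℕ → ℕ → G) : ∀ (l1 : List ℕ) (a : ℕ) (l2 : List ℕ),
    bprod x (l1 ++ a :: l2) = bprod x (l1 ++ [a]) * bprod x (a :: l2)
  | [], a, l2 => by simp [bprod]
  | [c], a, l2 => by
      show x (max c a) (min c a) * bprod x (a :: l2)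
        = (x (max c a) (min c a) * bprod x [a]) * bprod x (a :: l2)
      show x (max c a) (min c a) * bprod x (a :: l2)
        = (x (max c a) (min c a) * 1) * bprod x (a :: l2)
      rw [mul_one]
  | (c :: d :: l1), a, l2 => by
      have ih := bprod_mid x (d :: l1) a l2
      simp only [List.cons_append] at *
      rw [show bprod x (c :: d :: (l1 ++ a :: l2))
            = x (max c d) (min c d) * bprod x (d :: (l1 ++ a :: l2)) from rfl, ih,
        show bprod x (c :: d :: (l1 ++ [a]))
            = x (max c d) (min c d) * bprod x (d :: (l1 ++ [a])) from rfl, mul_assoc]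

lemma assemble {A P Q a b c e : G}
    (f1 : P * Q = Q * P) (f2 : b * Q = Q * b) (f3 : a * P = P * a)
    (f4 : P * b = c * P) (f5 : b * e = a * b) :
    A * (a * (Q * (P * b))) = A * (c * (P * (e * Q))) := by
  have key : a * (Q * (P * b)) = c * (P * (e * Q)) := by
    calc a * (Q * (P * b))
        = a * ((Q * P) * b) := by rw [mul_assoc]
      _ = a * ((P * Q) * b) := by rw [f1]
      _ = a * (P * (Q * b)) := by rw [mul_assoc]
      _ = a * (P * (b * Q)) := by rw [f2]
      _ = (a * P) * (b * Q) := by rw [mul_assoc]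
      _ = (P * a) * (b * Q) := by rw [f3]
      _ = P * ((a * b) * Q) := by rw [mul_assoc, ← mul_assoc a b Q]
      _ = P * ((b * e) * Q) := by rw [f5]
      _ = (P * b) * (e * Q) := by rw [mul_assoc b e Q, ← mul_assoc]
      _ = (c * P) * (e * Q) := by rw [f4]
      _ = c * (P * (e * Q)) := by rw [mul_assoc]
  rw [key]

end BKLaux

theorem bkl_left_inverse {G : Type*} [Group G] (n : ℕ) (x : ℕ → ℕ → G)
    (hcomm : ∀ t s r q : ℕ, t ≤ n → s < t → 1 ≤ s → r ≤ n → q < r → 1 ≤ q →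
      0 < ((t : ℤ) - r) * ((t : ℤ) - q) * ((s : ℤ) - r) * ((s : ℤ) - q) →
      x t s * x r q = x r q * x t s)
    (hband1 : ∀ t s r : ℕ, t ≤ n → s < t → r < s → 1 ≤ r →
      x t s * x s r = x t r * x t s)
    (hband2 : ∀ t s r : ℕ, t ≤ n → s < t → r < s → 1 ≤ r →
      x t r * x t s = x s r * x t r) :
    ∀ t s : ℕ, t ≤ n → s < t → 1 ≤ s →
      bprod x (descList n t ++ descList (s - 1) 1) * bprod x (descList (t - 1) s) * x t s =
        bprod x (descList n 1) ∧
      (x t s)⁻¹ = (bprod x (descList n 1))⁻¹ *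
        (bprod x (descList n t ++ descList (s - 1) 1) * bprod x (descList (t - 1) s)) := by
  intro t s ht hst hs
  have key : bprod x (descList n t ++ descList (s - 1) 1) *
      bprod x (descList (t - 1) s) * x t s = bprod x (descList n 1) := by
    obtain ⟨t', rfl⟩ : ∃ t', t = t'+1 := ⟨t-1, by omega⟩
    obtain ⟨s', rfl⟩ : ∃ s', s = s'+1 := ⟨s-1, by omega⟩
    simp only [Nat.add_sub_cancel]
    have hP : bprod x (descList t' (s'+1)) = BKLaux.Dn x (s'+1) t' :=
      BKLaux.bprod_descList x t' (s'+1)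
    have hδ : bprod x (descList n 1) = BKLaux.Dn x 1 n := BKLaux.bprod_descList x n 1
    have hL : BKLaux.Dn x (s'+1) t' * x (t'+1) (s'+1)
        = x (t'+1) t' * BKLaux.Dn x (s'+1) t' := by
      have := BKLaux.lemL hcomm hband1 hband2 (s := s'+1) (t := t'+1)
        (by omega) (by omega) ht
      simpa using this
    have hsplit1 : BKLaux.Dn x 1 n = BKLaux.Dn x (t'+1) n * BKLaux.Dn x 1 (t'+1) :=
      BKLaux.Dn_split x (by omega) n ht
    have hDt : BKLaux.Dn x 1 (t'+1) = x (t'+1) t' * BKLaux.Dn x 1 t' :=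
      BKLaux.Dn_succ x (by omega)
    rcases Nat.eq_zero_or_pos s' with hs0 | hs1
    · subst hs0
      simp only [Nat.zero_add] at *
      rw [BKLaux.descList_nil (by omega : (0:ℕ) < 1), List.append_nil,
        BKLaux.bprod_descList x n (t'+1), hP, hδ, hsplit1, hDt, mul_assoc, hL]
    · obtain ⟨l, hl⟩ := BKLaux.descList_cons (a := s') (b := 1) hs1
      have hlist : descList n (t'+1) ++ descList s' 1
          = descList n (t'+1+1) ++ ((t'+1) :: s' :: l) := by
        rw [BKLaux.descList_concat (a := n) (b := t'+1) ht, hl, List.append_assoc]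
        rfl
      have hjunc : bprod x (descList n (t'+1) ++ descList s' 1)
          = BKLaux.Dn x (t'+1) n * (x (t'+1) s' * BKLaux.Dn x 1 s') := by
        rw [hlist, BKLaux.bprod_mid x (descList n (t'+1+1)) (t'+1) (s' :: l),
          ← BKLaux.descList_concat ht, BKLaux.bprod_descList x n (t'+1),
          show bprod x ((t'+1) :: s' :: l)
            = x (max (t'+1) s') (min (t'+1) s') * bprod x (s' :: l) from rfl,
          Nat.max_eq_left (by omega), Nat.min_eq_right (by omega), ← hl,
          BKLaux.bprod_descList x s' 1]
      have hsplit2 : BKLaux.Dn x 1 t' = BKLaux.Dn x (s'+1) t' * BKLaux.Dn x 1 (s'+1) :=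
        BKLaux.Dn_split x (by omega) t' (by omega)
      have hsplit3 : BKLaux.Dn x 1 (s'+1) = x (s'+1) s' * BKLaux.Dn x 1 s' :=
        BKLaux.Dn_succ x (by omega)
      have f1 : BKLaux.Dn x (s'+1) t' * BKLaux.Dn x 1 s'
          = BKLaux.Dn x 1 s' * BKLaux.Dn x (s'+1) t' :=
        BKLaux.Dn_comm_Dn hcomm 1 s' (s'+1) (by omega) (by omega) (by omega) t' (by omega)
      have f2 : x (t'+1) (s'+1) * BKLaux.Dn x 1 s'
          = BKLaux.Dn x 1 s' * x (t'+1) (s'+1) :=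
        BKLaux.comm_Dn hcomm s' (by omega) (t'+1) (s'+1) 1 ht (by omega) (by omega)
          (by omega) (Or.inl (by omega))
      have f3 : x (t'+1) s' * BKLaux.Dn x (s'+1) t'
          = BKLaux.Dn x (s'+1) t' * x (t'+1) s' :=
        BKLaux.comm_Dn hcomm t' (by omega) (t'+1) s' (s'+1) ht (by omega) hs1
          (by omega) (Or.inr ⟨by omega, by omega⟩)
      have f5 : x (t'+1) (s'+1) * x (s'+1) s' = x (t'+1) s' * x (t'+1) (s'+1) :=
        hband1 (t'+1) (s'+1) s' ht (by omega) (by omega) hs1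
      rw [hjunc, hP, hδ, hsplit1, hDt, hsplit2, hsplit3]
      simp only [mul_assoc]
      exact BKLaux.assemble f1 f2 f3 hL f5
  refine ⟨key, ?_⟩
  rw [← key]
  group
end

section
/- Let G be a group with elements x_{ts} satisfying the Birman-Ko-Lee relations. Then for any t > t_3 > t_2 > t_1 ≥ 1 with t_2 > s ≥ 1, and for any word V that is a product of generators x_{kl} with t_2 - 1 ≥ k > l ≥ 1, one has x_{ts} V x_{t_2 t_1} x_{t_3 t_1} = x_{t_3 t_2} x_{ts} V x_{t_2 t_1}. -/
/-!
The band relations give `x t₂ t₁ * x t₃ t₁ = x t₃ t₂ * x t₂ t₁`, so it remains to move `x t₃ t₂`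
to the front past `x t s * V`. The pair `(t₃, t₂)` is nested inside `(t, s)` and disjoint from every
generator `x k l` of `V` (`k < t₂`), so the commutation relation applies to each of these letters.
-/

/-- The product of the four differences is positive exactly when the pairs `(t, s)` and `(r, q)`
are nested or disjoint, i.e. not interlaced. -/
def BKLCommute {G : Type*} [Group G] (n : ℕ) (x : ℕ → ℕ → G) : Prop :=
  ∀ t s r q : ℕ, t ≤ n → s < t → 1 ≤ s → r ≤ n → q < r → 1 ≤ q →
    0 < ((t : ℤ) - r) * ((t : ℤ) - q) * ((s : ℤ) - r) * ((s : ℤ) - q) →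
    x t s * x r q = x r q * x t s

namespace BKLCommute

variable {G : Type*} [Group G] {n : ℕ} {x : ℕ → ℕ → G}

theorem commute_of_nested (h : BKLCommute n x) {t s r q : ℕ} (ht : t ≤ n) (hs : 1 ≤ s)
    (hsq : s < q) (hqr : q < r) (hrt : r < t) : Commute (x t s) (x r q) := by
  refine h t s r q ht (by omega) hs (by omega) hqr (by omega) ?_
  have hsign : ((t : ℤ) - r) * ((t : ℤ) - q) * ((s : ℤ) - r) * ((s : ℤ) - q)
      = ((t : ℤ) - r) * ((t : ℤ) - q) * ((r : ℤ) - s) * ((q : ℤ) - s) := by ring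
  rw [hsign]
  have : (0 : ℤ) < (t : ℤ) - r := by omega
  have : (0 : ℤ) < (t : ℤ) - q := by omega
  have : (0 : ℤ) < (r : ℤ) - s := by omega
  have : (0 : ℤ) < (q : ℤ) - s := by omega
  positivity

theorem commute_of_disjoint (h : BKLCommute n x) {t s r q : ℕ} (ht : t ≤ n) (hq : 1 ≤ q)
    (hqr : q < r) (hrs : r < s) (hst : s < t) : Commute (x t s) (x r q) := by
  refine h t s r q ht hst (by omega) (by omega) hqr hq ?_
  have : (0 : ℤ) < (t : ℤ) - r := by omega
  have : (0 : ℤ) < (t : ℤ) - q := by omega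
  have : (0 : ℤ) < (s : ℤ) - r := by omega
  have : (0 : ℤ) < (s : ℤ) - q := by omega
  positivity

theorem commute_of_mem_closure (h : BKLCommute n x) {t s : ℕ} (ht : t ≤ n) (hst : s < t)
    {V : G} (hV : V ∈ Submonoid.closure {g : G | ∃ k l : ℕ, k ≤ s - 1 ∧ l < k ∧ 1 ≤ l ∧ g = x k l}) :
    Commute (x t s) V := by
  refine Submonoid.mem_centralizer_iff.mp
    ((Submonoid.closure_le (S := Submonoid.centralizer {x t s})).mpr ?_ hV) _ rfl
  rintro _ ⟨k, l, hk, hlk, hl, rfl⟩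
  rw [SetLike.mem_coe, Submonoid.mem_centralizer_iff]
  rintro _ rfl
  exact commute_of_disjoint h ht hl hlk (by omega) hst

end BKLCommute

theorem bkl_rel5 {G : Type*} [Group G] (n : ℕ) (x : ℕ → ℕ → G)
    (hcomm : ∀ t s r q : ℕ, t ≤ n → s < t → 1 ≤ s → r ≤ n → q < r → 1 ≤ q →
      0 < ((t : ℤ) - r) * ((t : ℤ) - q) * ((s : ℤ) - r) * ((s : ℤ) - q) →
      x t s * x r q = x r q * x t s)
    (hband1 : ∀ t s r : ℕ, t ≤ n → s < t → r < s → 1 ≤ r →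
      x t s * x s r = x t r * x t s)
    (hband2 : ∀ t s r : ℕ, t ≤ n → s < t → r < s → 1 ≤ r →
      x t r * x t s = x s r * x t r) :
    ∀ t s t₁ t₂ t₃ : ℕ, ∀ V : G, t ≤ n → t₃ < t → t₂ < t₃ → t₁ < t₂ → 1 ≤ t₁ → s < t₂ → 1 ≤ s →
      V ∈ Submonoid.closure {g : G | ∃ k l : ℕ, k ≤ t₂ - 1 ∧ l < k ∧ 1 ≤ l ∧ g = x k l} →
      x t s * V * x t₂ t₁ * x t₃ t₁ = x t₃ t₂ * x t s * V * x t₂ t₁ := by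
  intro t s t₁ t₂ t₃ V htn ht₃ ht₂ ht₁ h₁ hst₂ hs hV
  have ht₃n : t₃ ≤ n := by omega
  have hband : x t₂ t₁ * x t₃ t₁ = x t₃ t₂ * x t₂ t₁ :=
    (hband2 t₃ t₂ t₁ ht₃n ht₂ ht₁ h₁).symm.trans (hband1 t₃ t₂ t₁ ht₃n ht₂ ht₁ h₁).symm
  have hxV : Commute (x t s * V) (x t₃ t₂) :=
    (BKLCommute.commute_of_nested hcomm htn hs hst₂ ht₂ ht₃).mul_left
      (BKLCommute.commute_of_mem_closure hcomm ht₃n ht₂ hV).symm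
  rw [mul_assoc, hband, ← mul_assoc, hxV.eq, ← mul_assoc (x t₃ t₂)]
end

section
/- Let G be a group with elements x_{ts} satisfying the Birman-Ko-Lee relations. Then for t_3 > t_2 > t_1 and any word V that is a product of generators x_{kl}, we have x_{t_3 t_1} V x_{t_3 t_2} = x_{t_2 t_1} x_{t_3 t_1} V, provided every letter x_{kl} of V satisfies t_2 - 1 ≥ k > l ≥ 1. -/
theorem bkl_rel4' {G : Type*} [Group G] (n : ℕ) (x : ℕ → ℕ → G)
    (hcomm : ∀ t s r q : ℕ, t ≤ n → s < t → 1 ≤ s → r ≤ n → q < r → 1 ≤ q →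
      0 < ((t : ℤ) - r) * ((t : ℤ) - q) * ((s : ℤ) - r) * ((s : ℤ) - q) →
      x t s * x r q = x r q * x t s)
    (hband1 : ∀ t s r : ℕ, t ≤ n → s < t → r < s → 1 ≤ r →
      x t s * x s r = x t r * x t s)
    (hband2 : ∀ t s r : ℕ, t ≤ n → s < t → r < s → 1 ≤ r →
      x t r * x t s = x s r * x t r) :
    ∀ t₁ t₂ t₃ : ℕ, ∀ V : G, t₃ ≤ n → t₂ < t₃ → t₁ < t₂ → 1 ≤ t₁ →
      V ∈ Submonoid.closure {g : G | ∃ k l : ℕ, k ≤ t₂ - 1 ∧ l < k ∧ 1 ≤ l ∧ g = x k l} →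
      x t₃ t₁ * V * x t₃ t₂ = x t₂ t₁ * x t₃ t₁ * V := by
  intro t₁ t₂ t₃ V hn h32 h21 h1 hV
  have hcommV : V * x t₃ t₂ = x t₃ t₂ * V := by
    induction hV using Submonoid.closure_induction with
    | one => simp
    | mul a b _ _ ha hb => rw [mul_assoc, hb, ← mul_assoc, ha, mul_assoc]
    | mem g hg =>
      obtain ⟨k, l, hk, hlk, hl, rfl⟩ := hg
      have ht2 : 1 ≤ t₂ := le_trans h1 h21.le
      have hkt2 : k < t₂ := lt_of_le_of_lt hk (Nat.sub_lt ht2 one_pos)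
      refine (hcomm t₃ t₂ k l hn h32 ht2 (by omega) hlk hl ?_).symm
      have h1 : (k : ℤ) < t₂ := by exact_mod_cast hkt2
      have h2 : (l : ℤ) < k := by exact_mod_cast hlk
      have h3 : (t₂ : ℤ) < t₃ := by exact_mod_cast h32
      have p1 : (0:ℤ) < t₃ - k := by omega
      have p2 : (0:ℤ) < t₃ - l := by omega
      have p3 : (0:ℤ) < t₂ - k := by omega
      have p4 : (0:ℤ) < t₂ - l := by omega
      exact mul_pos (mul_pos (mul_pos p1 p2) p3) p4
  have hb := hband2 t₃ t₂ t₁ hn h32 h21 h1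
  rw [mul_assoc, hcommV, ← mul_assoc, hb]
end

section
/- In the braid group B_3, with band generators a_{21}, a_{31}, a_{32} and δ = a_{32} a_{21}, every element can be written in the form δ^k A where k is an integer and A is a positive word in the band generators that is not of the form δ A' for any positive word A'. -/
/-- The braid relation of `B₃`: `a₁ a₂ a₁ = a₂ a₁ a₂`. -/
def braid3Rels : Set (FreeGroup (Fin 2)) :=
  {FreeGroup.of 0 * FreeGroup.of 1 * FreeGroup.of 0 *
    (FreeGroup.of 1 * FreeGroup.of 0 * FreeGroup.of 1)⁻¹}

/-- The braid group `B₃` on three strands. -/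
abbrev B3 := PresentedGroup braid3Rels

/-- The Artin generator `a₁` of `B₃`. -/
def a1 : B3 := PresentedGroup.of 0

/-- The Artin generator `a₂` of `B₃`. -/
def a2 : B3 := PresentedGroup.of 1

/-- The band generator `a_{21} = a₁`. -/
def b21 : B3 := a1

/-- The band generator `a_{32} = a₂`. -/
def b32 : B3 := a2

/-- The band generator `a_{31} = a₂ a₁ a₂⁻¹`. -/
def b31 : B3 := a2 * a1 * a2⁻¹

/-- The Birman-Ko-Lee Garside element `δ = a_{32} a_{21}`. -/
def δ3 : B3 := b32 * b21

/-!
Conjugation by `δ` permutes the band generators cyclically (`a₂₁ ↦ a₃₁ ↦ a₃₂ ↦ a₂₁`, the last two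
steps by the braid relation), so `δ` normalises the positive monoid, and `aᵢ⁻¹ = δ⁻¹ · (band
generator)`. Pushing every `δ⁻¹` to the left writes each braid as `δ^k A` with `A` positive. Then
`δ` is split off `A` as long as possible; this stops because the exponent sum is `2` on `δ` and
nonnegative on positive words.
-/

section NormalForm

variable {G : Type*}

theorem exists_eq_zpow_mul_of_mem_closure [Group G] {M : Submonoid G} {d : G} {s : Set G}
    (hconj : ∀ a ∈ M, d * a * d⁻¹ ∈ M) (hs : s ⊆ M) (hinv : ∀ x ∈ s, d * x⁻¹ ∈ M)
    {g : G} (hg : g ∈ Subgroup.closure s) : ∃ (k : ℤ), ∃ A ∈ M, g = d ^ k * A := by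
  induction hg using Subgroup.closure_induction_right with
  | one => exact ⟨0, 1, M.one_mem, by simp⟩
  | mul_right x _ y hy ih =>
    obtain ⟨k, A, hA, rfl⟩ := ih
    exact ⟨k, A * y, M.mul_mem hA (hs hy), by group⟩
  | mul_inv_cancel x _ y hy ih =>
    obtain ⟨k, A, hA, rfl⟩ := ih
    -- `y⁻¹ = d⁻¹ (d y⁻¹)`, and `d⁻¹` moves left past `A` at the cost of conjugating `A` by `d`.
    refine ⟨k - 1, d * A * d⁻¹ * (d * y⁻¹), M.mul_mem (hconj A hA) (hinv y hy), ?_⟩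
    group

theorem exists_eq_pow_mul_of_lt [Monoid G] {M : Submonoid G} {d : G} (ℓ : G → ℕ)
    (hℓ : ∀ a ∈ M, ℓ a < ℓ (d * a)) {A : G} (hA : A ∈ M) :
    ∃ (j : ℕ), ∃ A' ∈ M, A = d ^ j * A' ∧ ∀ B ∈ M, A' ≠ d * B := by
  induction h : ℓ A using Nat.strong_induction_on generalizing A with
  | _ n ih =>
    by_cases hdiv : ∃ B ∈ M, A = d * B
    · obtain ⟨B, hB, rfl⟩ := hdiv
      obtain ⟨j, A', hA', rfl, hA'min⟩ := ih (ℓ B) (h ▸ hℓ B hB) hB rfl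
      exact ⟨j + 1, A', hA', by rw [pow_succ', mul_assoc], hA'min⟩
    · push Not at hdiv
      exact ⟨0, A, hA, by simp, hdiv⟩

end NormalForm

namespace B3

theorem a1_mul_a2_mul_a1 : a1 * a2 * a1 = a2 * a1 * a2 :=
  PresentedGroup.mk_eq_mk_of_mul_inv_mem rfl

abbrev bandMonoid : Submonoid B3 := Submonoid.closure {b21, b31, b32}

theorem b21_mem : b21 ∈ bandMonoid := Submonoid.subset_closure (by simp)

theorem b31_mem : b31 ∈ bandMonoid := Submonoid.subset_closure (by simp)

theorem b32_mem : b32 ∈ bandMonoid := Submonoid.subset_closure (by simp)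

theorem δ3_conj_b21 : δ3 * b21 * δ3⁻¹ = b31 := by
  simp only [δ3, b21, b31, b32]; group

theorem δ3_conj_b31 : δ3 * b31 * δ3⁻¹ = b32 := by
  simp only [δ3, b31, b32]
  calc a2 * a1 * (a2 * a1 * a2⁻¹) * (a2 * a1)⁻¹
      = a2 * (a1 * a2 * a1) * (a2⁻¹ * a1⁻¹ * a2⁻¹) := by group
    _ = a2 := by rw [a1_mul_a2_mul_a1]; group

theorem δ3_conj_b32 : δ3 * b32 * δ3⁻¹ = b21 := by
  simp only [δ3, b21, b32]
  rw [← a1_mul_a2_mul_a1]; group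

theorem δ3_conj_mem {A : B3} (hA : A ∈ bandMonoid) : δ3 * A * δ3⁻¹ ∈ bandMonoid := by
  have : bandMonoid ≤ bandMonoid.comap (MulAut.conj δ3).toMonoidHom := by
    refine Submonoid.closure_le.mpr ?_
    rintro _ (rfl | rfl | rfl)
    · simpa [δ3_conj_b21] using b31_mem
    · simpa [δ3_conj_b31] using b32_mem
    · simpa [δ3_conj_b32] using b21_mem
  simpa using this hA

theorem δ3_mul_a1_inv : δ3 * a1⁻¹ = b32 := by
  simp [δ3, b21]

theorem δ3_mul_a2_inv : δ3 * a2⁻¹ = b31 := rfl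

theorem exists_eq_δ3_zpow_mul (g : B3) : ∃ (k : ℤ), ∃ A ∈ bandMonoid, g = δ3 ^ k * A := by
  refine exists_eq_zpow_mul_of_mem_closure (fun _ => δ3_conj_mem) ?_ ?_
    (PresentedGroup.closure_range_of braid3Rels ▸ Subgroup.mem_top g)
  · rintro _ ⟨i, rfl⟩
    fin_cases i
    · exact b21_mem
    · exact b32_mem
  · rintro _ ⟨i, rfl⟩
    fin_cases i
    · show δ3 * a1⁻¹ ∈ _
      exact δ3_mul_a1_inv ▸ b32_mem
    · show δ3 * a2⁻¹ ∈ _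
      exact δ3_mul_a2_inv ▸ b31_mem

noncomputable def exponentSum : B3 →* Multiplicative ℤ :=
  PresentedGroup.toGroup (f := fun _ => Multiplicative.ofAdd 1) (by
    rintro _ rfl
    simp only [map_mul, map_inv, FreeGroup.lift_apply_of]
    group)

theorem exponentSum_a1 : exponentSum a1 = Multiplicative.ofAdd 1 := PresentedGroup.toGroup.of _

theorem exponentSum_a2 : exponentSum a2 = Multiplicative.ofAdd 1 := PresentedGroup.toGroup.of _

theorem exponentSum_δ3 : Multiplicative.toAdd (exponentSum δ3) = 2 := by
  simp [δ3, b21, b32, exponentSum_a1, exponentSum_a2]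

theorem exponentSum_nonneg {A : B3} (hA : A ∈ bandMonoid) :
    0 ≤ Multiplicative.toAdd (exponentSum A) := by
  induction hA using Submonoid.closure_induction with
  | one => simp
  | mem x hx =>
    rcases hx with rfl | rfl | rfl <;> simp [b21, b31, b32, exponentSum_a1, exponentSum_a2]
  | mul x y _ _ hx hy => simpa using add_nonneg hx hy

theorem exists_eq_δ3_pow_mul {A : B3} (hA : A ∈ bandMonoid) :
    ∃ (j : ℕ), ∃ A' ∈ bandMonoid, A = δ3 ^ j * A' ∧ ∀ B ∈ bandMonoid, A' ≠ δ3 * B := by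
  refine exists_eq_pow_mul_of_lt (fun a => (Multiplicative.toAdd (exponentSum a)).toNat)
    (fun a ha => ?_) hA
  have := exponentSum_nonneg ha
  simp only [map_mul, toAdd_mul, exponentSum_δ3]
  omega

end B3

theorem B3_normal_form :
    ∀ g : B3, ∃ (k : ℤ) (A : B3),
      A ∈ Submonoid.closure {b21, b31, b32} ∧ g = δ3 ^ k * A ∧
      ∀ A' ∈ Submonoid.closure {b21, b31, b32}, A ≠ δ3 * A' := by
  intro g
  obtain ⟨k, A, hA, rfl⟩ := B3.exists_eq_δ3_zpow_mul g
  obtain ⟨j, A', hA', rfl, hA'min⟩ := B3.exists_eq_δ3_pow_mul hA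
  exact ⟨k + j, A', hA', by rw [zpow_add, zpow_natCast, mul_assoc], hA'min⟩
end
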